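/- With T ⊆ A⊗B⊗C the 6-dimensional subspace spanned by all basis tensors a_i⊗b_j⊗c_k except a_0⊗b_1⊗c_0 and a_1⊗b_0⊗c_1 (dim A = dim B = dim C = 2), the set of decomposable (rank ≤ 1) tensors contained in T is the union of six 2-dimensional linear subspaces L_0,…,L_5, where consecutive spaces L_i, L_{i+1 mod 6} intersect in a line and non-consecutive ones intersect only in 0. -/

import Mathlib

noncomputable section

/-- the space `A ⊗ B ⊗ C` with `A = B = C = ℂ²`, in coordinates. -/
abbrev T222 := Fin 2 × Fin 2 × Fin 2 → ℂ

/-- the basis tensor `a_i ⊗ b_j ⊗ c_k`. -/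
def E (q : Fin 2 × Fin 2 × Fin 2) : T222 := Pi.single q 1

/-- `t` is a decomposable (rank `≤ 1`) tensor `u ⊗ v ⊗ w`. -/
def IsRankOne (t : T222) : Prop :=
  ∃ u v w : Fin 2 → ℂ, t = fun p => u p.1 * v p.2.1 * w p.2.2

/-- the 6-dimensional subspace `T` spanned by all basis tensors except
`a₀⊗b₁⊗c₀` and `a₁⊗b₀⊗c₁`. -/
def T : Submodule ℂ T222 :=
  Submodule.span ℂ (E '' {q | q ≠ (0, 1, 0) ∧ q ≠ (1, 0, 1)})

/-- the six 2-dimensional subspaces `L₀,…,L₅` (the cones over the six lines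
`r₀,…,r₅`), in cyclic order. -/
def L : Fin 6 → Submodule ℂ T222 :=
  ![Submodule.span ℂ {E (0, 1, 1), E (1, 1, 1)},
    Submodule.span ℂ {E (0, 0, 1), E (0, 1, 1)},
    Submodule.span ℂ {E (0, 0, 0), E (0, 0, 1)},
    Submodule.span ℂ {E (0, 0, 0), E (1, 0, 0)},
    Submodule.span ℂ {E (1, 0, 0), E (1, 1, 0)},
    Submodule.span ℂ {E (1, 1, 0), E (1, 1, 1)}]

/-!
A tensor lies in `span (E '' S)` exactly when its support lies in `S`, so every subspace in
sight is a coordinate subspace and the whole statement reduces to finite combinatorics of the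
cube `{0,1}³`. The support of `u ⊗ v ⊗ w` is the box `supp u × supp v × supp w`; membership in
`T` says that the box avoids the antipodal vertices `(0,1,0)` and `(1,0,1)`. The other six
vertices form a hexagon of edges of the cube, and a box avoiding both vertices lies in one of
these edges, the supports of the `Lᵢ`. Conversely a tensor supported on an edge of the cube is
decomposable, and `Lᵢ ⊓ Lⱼ` is the coordinate subspace of the intersection of two edges.
-/

open Function Finset Submodule Module

namespace Module.Basis

variable {ι R M : Type*} [Semiring R] [AddCommMonoid M] [Module R M] (b : Basis ι R M)

theorem span_image_inf_span_image (S S' : Set ι) :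
    span R (b '' S) ⊓ span R (b '' S') = span R (b '' (S ∩ S')) := by
  ext m
  simp only [Submodule.mem_inf, b.mem_span_image, Set.subset_inter_iff]

theorem finrank_span_image [Nontrivial R] [StrongRankCondition R] (S : Finset ι) :
    finrank R (span R (b '' S)) = #S := by
  rw [Set.image_eq_range]
  exact (finrank_span_eq_card (b.linearIndependent.comp _ Subtype.val_injective)).trans (by simp)

end Module.Basis

theorem Pi.mem_span_basisFun_image {ι R : Type*} [Semiring R] [Finite ι] {S : Set ι}
    {t : ι → R} : t ∈ span R (Pi.basisFun R ι '' S) ↔ support t ⊆ S := by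
  rw [Basis.mem_span_image]
  congr!
  ext i
  simp

theorem E_eq_basisFun : E = Pi.basisFun ℂ (Fin 2 × Fin 2 × Fin 2) :=
  funext fun q => by rw [E, Pi.basisFun_apply]

theorem mem_span_E_image {S : Set (Fin 2 × Fin 2 × Fin 2)} {t : T222} :
    t ∈ span ℂ (E '' S) ↔ support t ⊆ S := by
  rw [E_eq_basisFun]
  exact Pi.mem_span_basisFun_image

theorem mem_T_iff {t : T222} : t ∈ T ↔ t (0, 1, 0) = 0 ∧ t (1, 0, 1) = 0 := by
  rw [T, mem_span_E_image]
  constructor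
  · intro h
    exact ⟨notMem_support.mp fun h' => (h h').1 rfl, notMem_support.mp fun h' => (h h').2 rfl⟩
  · rintro ⟨h₁, h₂⟩ q hq
    exact ⟨by rintro rfl; exact hq h₁, by rintro rfl; exact hq h₂⟩

/-- The supports of the `L i`: the six edges of the cube `{0,1}³` avoiding `(0,1,0)` and
`(1,0,1)`, in cyclic order around the hexagon they form. -/
def edge : Fin 6 → Finset (Fin 2 × Fin 2 × Fin 2) :=
  ![{(0, 1, 1), (1, 1, 1)}, {(0, 0, 1), (0, 1, 1)}, {(0, 0, 0), (0, 0, 1)},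
    {(0, 0, 0), (1, 0, 0)}, {(1, 0, 0), (1, 1, 0)}, {(1, 1, 0), (1, 1, 1)}]

theorem L_eq_span_edge (i : Fin 6) : L i = span ℂ (E '' (edge i : Set _)) := by
  fin_cases i <;> simp [L, edge, Set.image_insert_eq]

theorem mem_L_iff {i : Fin 6} {t : T222} : t ∈ L i ↔ support t ⊆ (edge i : Set _) := by
  rw [L_eq_span_edge, mem_span_E_image]

theorem finrank_L (i : Fin 6) : finrank ℂ (L i) = #(edge i) := by
  rw [L_eq_span_edge, E_eq_basisFun, Basis.finrank_span_image]

theorem L_inf_L_eq_span (i j : Fin 6) : L i ⊓ L j = span ℂ (E '' ↑(edge i ∩ edge j)) := by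
  rw [L_eq_span_edge, L_eq_span_edge, E_eq_basisFun, Basis.span_image_inf_span_image, coe_inter]

theorem L_le_T (i : Fin 6) : L i ≤ T := by
  have h : (0, 1, 0) ∉ edge i ∧ (1, 0, 1) ∉ edge i := by revert i; decide
  intro t ht
  rw [mem_L_iff] at ht
  exact mem_T_iff.mpr
    ⟨notMem_support.mp fun h' => h.1 (ht h'), notMem_support.mp fun h' => h.2 (ht h')⟩

theorem isRankOne_of_support_subset_univ_prod {t : T222} (b c : Fin 2)
    (ht : support t ⊆ Set.univ ×ˢ {b} ×ˢ {c}) : IsRankOne t := by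
  refine ⟨fun i => t (i, b, c), Pi.single b 1, Pi.single c 1, funext fun ⟨i, j, k⟩ => ?_⟩
  by_cases hjk : j = b ∧ k = c
  · obtain ⟨rfl, rfl⟩ := hjk
    simp
  · have : t (i, j, k) = 0 := notMem_support.mp fun h => hjk (by simpa using ht h)
    grind

theorem isRankOne_of_support_subset_prod_univ_prod {t : T222} (a c : Fin 2)
    (ht : support t ⊆ {a} ×ˢ Set.univ ×ˢ {c}) : IsRankOne t := by
  refine ⟨Pi.single a 1, fun j => t (a, j, c), Pi.single c 1, funext fun ⟨i, j, k⟩ => ?_⟩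
  by_cases hik : i = a ∧ k = c
  · obtain ⟨rfl, rfl⟩ := hik
    simp
  · have : t (i, j, k) = 0 := notMem_support.mp fun h => hik (by simpa using ht h)
    grind

theorem isRankOne_of_support_subset_prod_univ {t : T222} (a b : Fin 2)
    (ht : support t ⊆ {a} ×ˢ {b} ×ˢ Set.univ) : IsRankOne t := by
  refine ⟨Pi.single a 1, Pi.single b 1, fun k => t (a, b, k), funext fun ⟨i, j, k⟩ => ?_⟩
  by_cases hij : i = a ∧ j = b
  · obtain ⟨rfl, rfl⟩ := hij
    simp
  · have : t (i, j, k) = 0 := notMem_support.mp fun h => hij (by simpa using ht h)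
    grind

theorem isRankOne_of_mem_L {i : Fin 6} {t : T222} (ht : t ∈ L i) : IsRankOne t := by
  rw [mem_L_iff] at ht
  fin_cases i
  · refine isRankOne_of_support_subset_univ_prod 1 1 (ht.trans ?_)
    simp [edge, Set.insert_subset_iff]
  · refine isRankOne_of_support_subset_prod_univ_prod 0 1 (ht.trans ?_)
    simp [edge, Set.insert_subset_iff]
  · refine isRankOne_of_support_subset_prod_univ 0 0 (ht.trans ?_)
    simp [edge, Set.insert_subset_iff]
  · refine isRankOne_of_support_subset_univ_prod 0 0 (ht.trans ?_)
    simp [edge, Set.insert_subset_iff]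
  · refine isRankOne_of_support_subset_prod_univ_prod 1 0 (ht.trans ?_)
    simp [edge, Set.insert_subset_iff]
  · refine isRankOne_of_support_subset_prod_univ 1 1 (ht.trans ?_)
    simp [edge, Set.insert_subset_iff]

theorem support_pureTensor (u v w : Fin 2 → ℂ) :
    support (fun p : Fin 2 × Fin 2 × Fin 2 => u p.1 * v p.2.1 * w p.2.2) =
      ↑(({i | u i ≠ 0} : Finset (Fin 2)) ×ˢ ({j | v j ≠ 0} : Finset (Fin 2)) ×ˢ
        ({k | w k ≠ 0} : Finset (Fin 2))) := by
  ext
  simp [and_assoc]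

theorem exists_box_subset_edge : ∀ X Y Z : Finset (Fin 2), (0, 1, 0) ∉ X ×ˢ Y ×ˢ Z →
    (1, 0, 1) ∉ X ×ˢ Y ×ˢ Z → ∃ i, X ×ˢ Y ×ˢ Z ⊆ edge i := by
  decide

theorem exists_mem_L_of_isRankOne {t : T222} (h : IsRankOne t) (hT : t ∈ T) :
    ∃ i, t ∈ L i := by
  obtain ⟨u, v, w, rfl⟩ := h
  obtain ⟨h₁, h₂⟩ := mem_T_iff.mp hT
  simp_rw [mem_L_iff, support_pureTensor, coe_subset]
  refine exists_box_subset_edge _ _ _ ?_ ?_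
  · rw [← mem_coe, ← support_pureTensor]
    exact notMem_support.mpr h₁
  · rw [← mem_coe, ← support_pureTensor]
    exact notMem_support.mpr h₂

/-- the decomposable tensors contained in `T` form the union of the six
2-dimensional subspaces `L₀,…,L₅`; consecutive `Lᵢ, L_{i+1 mod 6}` meet in a line and
non-consecutive ones meet only in `0`. -/
theorem stmt7 :
    ({t : T222 | IsRankOne t ∧ t ∈ T} = ⋃ i : Fin 6, (L i : Set T222)) ∧
    (∀ i : Fin 6, Module.finrank ℂ ↥(L i) = 2) ∧
    (∀ i j : Fin 6, i ≠ j →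
      ((j = i + 1 ∨ i = j + 1) → Module.finrank ℂ ↥(L i ⊓ L j) = 1) ∧
      (¬ (j = i + 1 ∨ i = j + 1) → L i ⊓ L j = ⊥)) := by
  have card_edge : ∀ i, #(edge i) = 2 := by decide
  have edge_inter : ∀ i j : Fin 6, i ≠ j →
      ((j = i + 1 ∨ i = j + 1) → #(edge i ∩ edge j) = 1) ∧
      (¬ (j = i + 1 ∨ i = j + 1) → edge i ∩ edge j = ∅) := by
    decide
  refine ⟨?_, fun i => (finrank_L i).trans (card_edge i), fun i j hij => ?_⟩
  · ext t
    simp only [Set.mem_ofPred_eq, Set.mem_iUnion, SetLike.mem_coe]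
    exact ⟨fun ⟨h, hT⟩ => exists_mem_L_of_isRankOne h hT,
      fun ⟨i, hi⟩ => ⟨isRankOne_of_mem_L hi, L_le_T i hi⟩⟩
  · obtain ⟨hadj, hnadj⟩ := edge_inter i j hij
    refine ⟨fun h => ?_, fun h => ?_⟩
    · rw [L_inf_L_eq_span, E_eq_basisFun, Basis.finrank_span_image, hadj h]
    · rw [L_inf_L_eq_span, hnadj h, coe_empty, Set.image_empty, span_empty]
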